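/- In the AoI-distortion MDP, if a positive transmit power p > 0 is α-optimal at state (δ, d, b), then p is also α-optimal at (δ, d', b) for any d' > d; and if p = 0 is optimal at (δ, d, b), then 0 is optimal at (δ, d', b) for any d' < d. Hence for fixed δ and b the optimal action has threshold structure in d. -/

import Mathlib

/-- Distortion after transmitting with power `p > 0`:
`D(p) = σob + (σθ − σob) σch/(σch + p)`. -/
noncomputable def distortion (σθ σob σch : ℝ) (p : ℕ) : ℝ :=
  σob + (σθ - σob) * σch / (σch + (p : ℝ))

/-- The state-action value: immediate cost plus discounted expected future cost.
State `(δ, d, b)` (AoI, distortion, energy), action `p ∈ {0,…,b}`.  One unit of energy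
is harvested with probability `λ`.  If `p = 0` the cost is `δ+1+w d`, the age
increments (capped at `δmax`) and the distortion persists; if `p > 0` the cost is
`1 + w D(p)`, the age resets to 1, the distortion becomes `D(p)` and the energy
decreases by `p` (harvesting capped at `bmax`). -/
noncomputable def Qval (α lam w σθ σob σch : ℝ) (δmax bmax : ℕ)
    (V : ℕ → ℝ → ℕ → ℝ) (δ : ℕ) (d : ℝ) (b : ℕ) (p : ℕ) : ℝ :=
  if p = 0 then
    ((δ : ℝ) + 1 + w * d)
      + α * (lam * V (min (δ + 1) δmax) d (min (b + 1) bmax)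
          + (1 - lam) * V (min (δ + 1) δmax) d b)
  else
    (1 + w * distortion σθ σob σch p)
      + α * (lam * V 1 (distortion σθ σob σch p) (min (b - p + 1) bmax)
          + (1 - lam) * V 1 (distortion σθ σob σch p) (b - p))

/-- `V` is a fixed point of the Bellman optimality operator:
`V(s) = min_{0 ≤ p ≤ b} Q(s, p)`. -/
def IsBellmanFixedPoint (α lam w σθ σob σch : ℝ) (δmax bmax : ℕ)
    (V : ℕ → ℝ → ℕ → ℝ) : Prop :=
  ∀ δ : ℕ, ∀ d : ℝ, ∀ b : ℕ,
    V δ d b = (Finset.range (b + 1)).inf'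
      (Finset.nonempty_range_iff.mpr (Nat.succ_ne_zero b))
      (Qval α lam w σθ σob σch δmax bmax V δ d b)

/-- `p` is an α-optimal action at state `(δ, d, b)`: it is feasible (`p ≤ b`) and
minimizes the state-action value `Q` over all feasible actions. -/
def IsOptimalAction (α lam w σθ σob σch : ℝ) (δmax bmax : ℕ)
    (V : ℕ → ℝ → ℕ → ℝ) (δ : ℕ) (d : ℝ) (b : ℕ) (p : ℕ) : Prop :=
  p ≤ b ∧ ∀ q : ℕ, q ≤ b →
    Qval α lam w σθ σob σch δmax bmax V δ d b p
      ≤ Qval α lam w σθ σob σch δmax bmax V δ d b q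

/-- `Qval` at a positive action does not depend on the distortion `d`. -/
lemma Qval_pos_indep (α lam w σθ σob σch : ℝ) (δmax bmax : ℕ)
    (V : ℕ → ℝ → ℕ → ℝ) (δ : ℕ) (d d' : ℝ) (b : ℕ) {q : ℕ} (hq : q ≠ 0) :
    Qval α lam w σθ σob σch δmax bmax V δ d b q
      = Qval α lam w σθ σob σch δmax bmax V δ d' b q := by
  simp [Qval, hq]

/-- Monotonicity of a Bellman fixed point in the distortion coordinate. -/
lemma V_mono (α lam w σθ σob σch : ℝ) (δmax bmax : ℕ) (V : ℕ → ℝ → ℕ → ℝ)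
    (hα0 : 0 < α) (hα1 : α < 1) (hl0 : 0 ≤ lam) (hl1 : lam ≤ 1) (hw : 0 ≤ w)
    (hV : IsBellmanFixedPoint α lam w σθ σob σch δmax bmax V)
    {d d' : ℝ} (hd : d ≤ d') : ∀ δ b : ℕ, V δ d b ≤ V δ d' b := by
  intro δ0 b0
  set N := max δ0 δmax with hN
  set B := max b0 bmax with hB
  set F : Finset (ℕ × ℕ) := Finset.range (N + 1) ×ˢ Finset.range (B + 1) with hF
  have hmemF : ∀ δ b : ℕ, δ ≤ N → b ≤ B → (δ, b) ∈ F := by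
    intro δ b h1 h2
    simp only [hF, Finset.mem_product, Finset.mem_range]
    exact ⟨Nat.lt_succ_of_le h1, Nat.lt_succ_of_le h2⟩
  have hFne : F.Nonempty :=
    ⟨(δ0, b0), hmemF _ _ (le_max_left _ _) (le_max_left _ _)⟩
  set g : ℕ × ℕ → ℝ := fun s => V s.1 d s.2 - V s.1 d' s.2 with hg
  set S := F.sup' hFne g with hS
  have hgS : ∀ s ∈ F, g s ≤ S := fun s hs => Finset.le_sup' g hs
  have hbound : ∀ s ∈ F, g s ≤ max 0 (α * S) := by
    rintro ⟨δ, b⟩ hsF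
    have hδN : δ ≤ N := by
      have := (Finset.mem_product.mp hsF).1
      exact Nat.lt_succ_iff.mp (Finset.mem_range.mp this)
    have hbB : b ≤ B := by
      have := (Finset.mem_product.mp hsF).2
      exact Nat.lt_succ_iff.mp (Finset.mem_range.mp this)
    obtain ⟨q, hqmem, hq⟩ := Finset.exists_mem_eq_inf'
      (Finset.nonempty_range_iff.mpr (Nat.succ_ne_zero b))
      (Qval α lam w σθ σob σch δmax bmax V δ d' b)
    have h2 : V δ d' b = Qval α lam w σθ σob σch δmax bmax V δ d' b q := by
      rw [hV δ d' b]; exact hq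
    have h1 : V δ d b ≤ Qval α lam w σθ σob σch δmax bmax V δ d b q := by
      rw [hV δ d b]; exact Finset.inf'_le _ hqmem
    rcases Nat.eq_zero_or_pos q with h0 | hq0
    · subst h0
      -- successor states lie in F
      have hδ' : min (δ + 1) δmax ≤ N :=
        le_trans (min_le_min (Nat.succ_le_succ hδN) (le_max_right δ0 δmax))
          (min_le_right _ _)
      have hδ'2 : min (δ + 1) δmax ≤ N := by
        rcases le_or_gt (δ + 1) δmax with h | h
        · exact le_trans (min_le_right _ _) (le_max_right _ _)
        · exact le_trans (min_le_right _ _) (le_max_right _ _)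
      have hb1 : min (b + 1) bmax ≤ B :=
        le_trans (min_le_right _ _) (le_max_right _ _)
      have gA := hgS _ (hmemF (min (δ + 1) δmax) (min (b + 1) bmax) hδ'2 hb1)
      have gB := hgS _ (hmemF (min (δ + 1) δmax) b hδ'2 hbB)
      simp only [hg] at gA gB
      have hαS : g (δ, b) ≤ α * S := by
        simp only [hg, Qval, eq_self_iff_true, if_true] at h1 h2 ⊢
        nlinarith [mul_le_mul_of_nonneg_left gA hl0,
          mul_le_mul_of_nonneg_left gB (by linarith : (0:ℝ) ≤ 1 - lam)]
      exact le_trans hαS (le_max_right _ _)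
    · have hq0' : q ≠ 0 := Nat.pos_iff_ne_zero.mp hq0
      have : g (δ, b) ≤ 0 := by
        have := Qval_pos_indep α lam w σθ σob σch δmax bmax V δ d d' b hq0'
        simp only [hg]; rw [h2, ← this]; linarith
      exact le_trans this (le_max_left _ _)
  have hSb : S ≤ max 0 (α * S) := Finset.sup'_le hFne g hbound
  have hS0 : S ≤ 0 := by
    by_contra h
    push_neg at h
    have h1 : α * S < S := by nlinarith
    have h2 : max 0 (α * S) < S := max_lt h h1
    linarith
  have := le_trans (hgS _ (hmemF δ0 b0 (le_max_left _ _) (le_max_left _ _))) hS0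
  simpa [hg] using this

/-- `Qval` at action `0` is monotone in the distortion. -/
lemma Qval_zero_mono (α lam w σθ σob σch : ℝ) (δmax bmax : ℕ)
    (V : ℕ → ℝ → ℕ → ℝ)
    (hα0 : 0 < α) (hα1 : α < 1) (hl0 : 0 ≤ lam) (hl1 : lam ≤ 1) (hw : 0 ≤ w)
    (hV : IsBellmanFixedPoint α lam w σθ σob σch δmax bmax V)
    {d d' : ℝ} (hd : d ≤ d') (δ b : ℕ) :
    Qval α lam w σθ σob σch δmax bmax V δ d b 0
      ≤ Qval α lam w σθ σob σch δmax bmax V δ d' b 0 := by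
  have hm := V_mono α lam w σθ σob σch δmax bmax V hα0 hα1 hl0 hl1 hw hV hd
  have h1 := hm (min (δ + 1) δmax) (min (b + 1) bmax)
  have h2 := hm (min (δ + 1) δmax) b
  simp only [Qval, eq_self_iff_true, if_true]
  nlinarith [mul_le_mul_of_nonneg_left h1 hl0,
    mul_le_mul_of_nonneg_left h2 (by linarith : (0:ℝ) ≤ 1 - lam)]

/-- In the AoI-distortion MDP, if a positive transmit power `p > 0` is
α-optimal at `(δ, d, b)`, then `p` is also α-optimal at `(δ, d', b)` for any
`d' > d`; and if `p = 0` is optimal at `(δ, d, b)`, then `0` is optimal at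
`(δ, d', b)` for any `d' < d`.  Hence for fixed `δ` and `b` the optimal action has a
threshold structure in the distortion `d`. -/
theorem optimal_power_threshold_in_distortion
    (α lam w σθ σob σch : ℝ) (δmax bmax : ℕ) (V : ℕ → ℝ → ℕ → ℝ)
    (hα0 : 0 < α) (hα1 : α < 1) (hl0 : 0 < lam) (hl1 : lam < 1) (hw : 0 < w)
    (hob : 0 ≤ σob) (hθob : σob < σθ) (hch : 0 < σch)
    (hδmax : 1 ≤ δmax)
    (hV : IsBellmanFixedPoint α lam w σθ σob σch δmax bmax V) :
    (∀ δ : ℕ, ∀ d d' : ℝ, ∀ b p : ℕ,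
       1 ≤ δ → δ ≤ δmax → b ≤ bmax → 0 < p → d < d' →
       IsOptimalAction α lam w σθ σob σch δmax bmax V δ d b p →
       IsOptimalAction α lam w σθ σob σch δmax bmax V δ d' b p) ∧
    (∀ δ : ℕ, ∀ d d' : ℝ, ∀ b : ℕ,
       1 ≤ δ → δ ≤ δmax → b ≤ bmax → d' < d →
       IsOptimalAction α lam w σθ σob σch δmax bmax V δ d b 0 →
       IsOptimalAction α lam w σθ σob σch δmax bmax V δ d' b 0) := by
  have hl0' : (0:ℝ) ≤ lam := le_of_lt hl0
  have hl1' : lam ≤ 1 := le_of_lt hl1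
  have hw' : (0:ℝ) ≤ w := le_of_lt hw
  constructor
  · rintro δ d d' b p _ _ _ hp hdd' ⟨hpb, hopt⟩
    refine ⟨hpb, fun q hqb => ?_⟩
    have hp0 : p ≠ 0 := Nat.pos_iff_ne_zero.mp hp
    rcases Nat.eq_zero_or_pos q with rfl | hq0
    · calc Qval α lam w σθ σob σch δmax bmax V δ d' b p
          = Qval α lam w σθ σob σch δmax bmax V δ d b p :=
            (Qval_pos_indep α lam w σθ σob σch δmax bmax V δ d d' b hp0).symm
        _ ≤ Qval α lam w σθ σob σch δmax bmax V δ d b 0 := hopt 0 (Nat.zero_le b)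
        _ ≤ Qval α lam w σθ σob σch δmax bmax V δ d' b 0 :=
            Qval_zero_mono α lam w σθ σob σch δmax bmax V hα0 hα1 hl0' hl1' hw'
              hV (le_of_lt hdd') δ b
    · have hq0' : q ≠ 0 := Nat.pos_iff_ne_zero.mp hq0
      calc Qval α lam w σθ σob σch δmax bmax V δ d' b p
          = Qval α lam w σθ σob σch δmax bmax V δ d b p :=
            (Qval_pos_indep α lam w σθ σob σch δmax bmax V δ d d' b hp0).symm
        _ ≤ Qval α lam w σθ σob σch δmax bmax V δ d b q := hopt q hqb
        _ = Qval α lam w σθ σob σch δmax bmax V δ d' b q :=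
            Qval_pos_indep α lam w σθ σob σch δmax bmax V δ d d' b hq0'
  · rintro δ d d' b _ _ _ hdd' ⟨hpb, hopt⟩
    refine ⟨Nat.zero_le b, fun q hqb => ?_⟩
    rcases Nat.eq_zero_or_pos q with rfl | hq0
    · exact le_refl _
    · have hq0' : q ≠ 0 := Nat.pos_iff_ne_zero.mp hq0
      calc Qval α lam w σθ σob σch δmax bmax V δ d' b 0
          ≤ Qval α lam w σθ σob σch δmax bmax V δ d b 0 :=
            Qval_zero_mono α lam w σθ σob σch δmax bmax V hα0 hα1 hl0' hl1' hw'
              hV (le_of_lt hdd') δ b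
        _ ≤ Qval α lam w σθ σob σch δmax bmax V δ d b q := hopt q hqb
        _ = Qval α lam w σθ σob σch δmax bmax V δ d' b q :=
            Qval_pos_indep α lam w σθ σob σch δmax bmax V δ d d' b hq0'
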